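/- Let K, K′ ⊆ ℝ_+^n be anti-blocking convex bodies and let 0 ≤ j ≤ n. Then V_n(K[j], −K′[n−j]) = binom(n,j)^{−1} Σ_E Vol_j(P_E K) · Vol_{n−j}(P_{E^⊥} K′), where the sum runs over all j-dimensional coordinate subspaces E = span{e_i : i ∈ I} with I ⊆ {1,…,n}, |I| = j, and P_E denotes orthogonal projection onto E. -/

import Mathlib

open MeasureTheory
open scoped Pointwise

noncomputable section

/-- The nonnegative orthant `ℝ₊ⁿ`. -/
def nonnegOrthant (n : ℕ) : Set (EuclideanSpace ℝ (Fin n)) := {x | ∀ i, 0 ≤ x i}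

/-- The sign `±1` associated to a boolean. -/
def sgn (b : Bool) : ℝ := if b then 1 else -1

/-- The closed orthant `σ ℝ₊ⁿ` corresponding to a sign vector `σ ∈ {-1,1}ⁿ`. -/
def signedOrthant {n : ℕ} (σ : Fin n → Bool) : Set (EuclideanSpace ℝ (Fin n)) :=
  {x | ∀ i, 0 ≤ sgn (σ i) * x i}

/-- Coordinatewise reflection `σ S = {(σ₁x₁, …, σₙxₙ) : x ∈ S}`. -/
def sigmaAct {n : ℕ} (σ : Fin n → Bool) (S : Set (EuclideanSpace ℝ (Fin n))) :
    Set (EuclideanSpace ℝ (Fin n)) :=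
  (fun x => (WithLp.toLp 2 (fun i => sgn (σ i) * x i) : EuclideanSpace ℝ (Fin n))) '' S

/-- Orthogonal projection onto the coordinate subspace `span {eᵢ : i ∈ I}`. -/
def coordProj {n : ℕ} (I : Finset (Fin n)) (x : EuclideanSpace ℝ (Fin n)) :
    EuclideanSpace ℝ (Fin n) :=
  (WithLp.toLp 2 (fun i => if i ∈ I then x i else 0) : EuclideanSpace ℝ (Fin n))

/-- The coordinate subspace `span {eᵢ : i ∈ I}`, as a set. -/
def coordSubspace {n : ℕ} (I : Finset (Fin n)) : Set (EuclideanSpace ℝ (Fin n)) :=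
  {x | ∀ i ∉ I, x i = 0}

/-- A set `K ⊆ ℝ₊ⁿ` is anti-blocking if for every coordinate subspace `E` the orthogonal
projection `P_E K` equals the section `K ∩ E`. -/
def IsAntiBlocking {n : ℕ} (K : Set (EuclideanSpace ℝ (Fin n))) : Prop :=
  K ⊆ nonnegOrthant n ∧ ∀ I : Finset (Fin n), coordProj I '' K = K ∩ coordSubspace I

/-- `K` is locally anti-blocking if `(σK) ∩ ℝ₊ⁿ` is anti-blocking for every sign vector `σ`. -/
def IsLocallyAntiBlocking {n : ℕ} (K : Set (EuclideanSpace ℝ (Fin n))) : Prop :=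
  ∀ σ : Fin n → Bool, IsAntiBlocking (sigmaAct σ K ∩ nonnegOrthant n)

/-- The coordinate simplex `conv{0, e₁, …}` in the Euclidean space with coordinates `ι`. -/
def coordSimplex (ι : Type*) [Fintype ι] [DecidableEq ι] : Set (EuclideanSpace ℝ ι) :=
  convexHull ℝ (insert 0 (Set.range fun i : ι => EuclideanSpace.single i (1 : ℝ)))

/-- Restriction to the coordinates in `I`, realizing the orthogonal projection onto
`span {eᵢ : i ∈ I}` as a map onto a `#I`-dimensional Euclidean space (so that volumes of
images compute lower-dimensional Lebesgue measures of coordinate projections). -/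
def restrictCoords {n : ℕ} (I : Finset (Fin n)) (x : EuclideanSpace ℝ (Fin n)) :
    EuclideanSpace ℝ ↥I :=
  (WithLp.toLp 2 (fun i : ↥I => x i) : EuclideanSpace ℝ ↥I)

/-! Write a point of `l • K + m • (-K')` as `z = l x - m y` with `x ∈ K`, `y ∈ K'`, and let
`I = {i | 0 ≤ zᵢ}`. Anti-blocking convex bodies are down-closed in `ℝ₊ⁿ`, so the truncations of
`x - (m/l) y` to `I` and of `y - (l/m) x` to `Iᶜ` still lie in `K` and `K'`: thus `z` lies in the
product `l P_I K × (-m) P_{Iᶜ} K'`, and conversely every such product lies in `l • K + m • (-K')`.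
These products overlap only inside coordinate hyperplanes, so
`Vol(l • K + m • (-K')) = ∑_I l^|I| m^(n-|I|) Vol(P_I K) Vol(P_{Iᶜ} K')`, and the mixed volumes are
read off by comparing coefficients of this polynomial in `l` with the Minkowski expansion. -/

open Finset

variable {n : ℕ}

def splitCoords (I : Finset (Fin n)) :
    EuclideanSpace ℝ (Fin n) ≃ᵐ EuclideanSpace ℝ I × EuclideanSpace ℝ ↥Iᶜ :=
  (MeasurableEquiv.toLp 2 (Fin n → ℝ)).symm.trans <|
    (MeasurableEquiv.piEquivPiSubtypeProd (fun _ => ℝ) (· ∈ I)).trans <|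
      .prodCongr (MeasurableEquiv.toLp 2 _) <|
        (MeasurableEquiv.piCongrLeft (fun _ => ℝ)
          (Equiv.subtypeEquivRight fun _ => mem_compl.symm)).trans (MeasurableEquiv.toLp 2 _)

lemma splitCoords_apply (I : Finset (Fin n)) (z : EuclideanSpace ℝ (Fin n)) :
    splitCoords I z = (restrictCoords I z, restrictCoords Iᶜ z) := by
  ext i <;> simp [splitCoords, restrictCoords, MeasurableEquiv.piCongrLeft, Equiv.piCongrLeft,
    MeasurableEquiv.prodCongr, MeasurableEquiv.trans]

lemma measurePreserving_splitCoords (I : Finset (Fin n)) :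
    MeasurePreserving (splitCoords I) := by
  -- `↥I` carries two different `Fintype` instances on the two sides
  have h : MeasurePreserving (MeasurableEquiv.piEquivPiSubtypeProd (fun _ : Fin n => ℝ) (· ∈ I))
      volume (volume.prod volume) := by
    convert volume_preserving_piEquivPiSubtypeProd (fun _ : Fin n => ℝ) (· ∈ I) using 2
    · rfl
    · rw [Measure.volume_eq_prod]
      congr!
  exact ((PiLp.volume_preserving_toLp I).prod
    ((PiLp.volume_preserving_toLp _).comp (volume_measurePreserving_piCongrLeft (fun _ => ℝ)
      (Equiv.subtypeEquivRight fun (x : Fin n) => (mem_compl (a := x)).symm)))).comp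
    (h.comp (EuclideanSpace.volume_preserving_symm_measurableEquiv_toLp (Fin n)))

lemma EuclideanSpace.volume_setOf_apply_eq_zero {ι : Type*} [Fintype ι] (i : ι) :
    volume {z : EuclideanSpace ℝ ι | z i = 0} = 0 := by
  classical
  let f : EuclideanSpace ℝ ι →ₗ[ℝ] ℝ := (EuclideanSpace.proj (𝕜 := ℝ) i).toLinearMap
  refine Measure.addHaar_submodule volume (LinearMap.ker f) fun h => ?_
  have : EuclideanSpace.single i (1 : ℝ) ∈ LinearMap.ker f := h ▸ trivial
  simp [f] at this

@[simp]
lemma coordProj_apply (I : Finset (Fin n)) (x : EuclideanSpace ℝ (Fin n)) (i : Fin n) :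
    coordProj I x i = if i ∈ I then x i else 0 := rfl

namespace IsAntiBlocking

variable {K : Set (EuclideanSpace ℝ (Fin n))}

lemma nonneg (hK : IsAntiBlocking K) {x : EuclideanSpace ℝ (Fin n)} (hx : x ∈ K) (i : Fin n) :
    0 ≤ x i :=
  hK.1 hx i

lemma coordProj_mem (hK : IsAntiBlocking K) (I : Finset (Fin n)) {x : EuclideanSpace ℝ (Fin n)}
    (hx : x ∈ K) : coordProj I x ∈ K :=
  ((hK.2 I).subset ⟨x, hx, rfl⟩).1

lemma update_mem (hK : IsAntiBlocking K) (hconv : Convex ℝ K) {x : EuclideanSpace ℝ (Fin n)}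
    (hx : x ∈ K) {a : Fin n} {t : ℝ} (ht : 0 ≤ t) (htx : t ≤ x a) :
    WithLp.toLp 2 (Function.update x.ofLp a t) ∈ K := by
  -- `update x a t` lies on the segment from `coordProj {a}ᶜ x` to `x`
  have hθ : t / x a ≤ 1 := div_le_one_of_le₀ htx (ht.trans htx)
  convert hconv (hK.coordProj_mem {a}ᶜ hx) hx (sub_nonneg.2 hθ) (div_nonneg ht (ht.trans htx))
    (sub_add_cancel 1 _) using 1
  ext i
  rcases eq_or_ne i a with rfl | hi
  · simp [div_mul_cancel_of_imp fun h : x i = 0 => le_antisymm (h ▸ htx) ht]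
  · simp only [Function.update_of_ne hi, PiLp.add_apply, PiLp.smul_apply, coordProj_apply,
      mem_compl, mem_singleton, hi, if_true, not_false_eq_true, smul_eq_mul]
    ring

lemma mem_of_le (hK : IsAntiBlocking K) (hconv : Convex ℝ K) {x y : EuclideanSpace ℝ (Fin n)}
    (hx : x ∈ K) (hy : ∀ i, 0 ≤ y i) (hyx : ∀ i, y i ≤ x i) : y ∈ K := by
  suffices ∀ s : Finset (Fin n), WithLp.toLp 2 (fun i => if i ∈ s then y i else x i) ∈ K by
    simpa using this univ
  intro s
  induction s using Finset.induction_on with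
  | empty => simpa using hx
  | insert a s ha ih =>
    convert hK.update_mem hconv ih (a := a) (hy a) (by simpa [ha] using hyx a) using 2
    ext i
    rcases eq_or_ne i a with rfl | hi <;> simp [Function.update, *]

lemma coordProj_smul_sub_mem (hK : IsAntiBlocking K) (hconv : Convex ℝ K)
    {x y : EuclideanSpace ℝ (Fin n)} (hx : x ∈ K) (hy : ∀ i, 0 ≤ y i) {l m : ℝ} (hl : 0 < l)
    (hm : 0 ≤ m) {I : Finset (Fin n)} (hI : ∀ i ∈ I, 0 ≤ l * x i - m * y i) :
    coordProj I (l⁻¹ • (l • x - m • y)) ∈ K := by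
  refine hK.mem_of_le hconv hx (fun i => ?_) (fun i => ?_) <;> by_cases hi : i ∈ I <;>
    simp only [coordProj_apply, hi, if_true, if_false, PiLp.smul_apply, PiLp.sub_apply, smul_eq_mul]
  · exact mul_nonneg (inv_nonneg.2 hl.le) (hI i hi)
  · rfl
  · rw [inv_mul_le_iff₀ hl]; nlinarith [hy i]
  · exact hK.nonneg hx i

end IsAntiBlocking

def orthantPiece (l m : ℝ) (K K' : Set (EuclideanSpace ℝ (Fin n))) (I : Finset (Fin n)) :
    Set (EuclideanSpace ℝ (Fin n)) :=
  {z | (∃ x ∈ K, ∀ i ∈ I, z i = l * x i) ∧ ∃ y ∈ K', ∀ i ∉ I, z i = -m * y i}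

section orthantPiece

variable {l m : ℝ} {K K' : Set (EuclideanSpace ℝ (Fin n))} {I J : Finset (Fin n)}

lemma mem_smul_add_smul_neg_iff {z : EuclideanSpace ℝ (Fin n)} :
    z ∈ l • K + m • -K' ↔ ∃ x ∈ K, ∃ y ∈ K', l • x - m • y = z := by
  constructor
  · rintro ⟨_, ⟨x, hx, rfl⟩, _, ⟨w, hw, rfl⟩, rfl⟩
    exact ⟨x, hx, -w, hw, by simp [sub_eq_add_neg]⟩
  · rintro ⟨x, hx, y, hy, rfl⟩
    rw [sub_eq_add_neg, ← smul_neg]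
    exact Set.add_mem_add (Set.smul_mem_smul_set hx) (Set.smul_mem_smul_set (Set.neg_mem_neg.2 hy))

lemma orthantPiece_eq_preimage :
    orthantPiece l m K K' I =
      splitCoords I ⁻¹' ((l • (restrictCoords I '' K)) ×ˢ ((-m) • (restrictCoords Iᶜ '' K'))) := by
  ext z
  simp only [Set.mem_preimage, splitCoords_apply, Set.mem_prod, Set.mem_smul_set,
    Set.exists_mem_image]
  simp [orthantPiece, restrictCoords, WithLp.ext_iff, funext_iff, eq_comm]

lemma volume_orthantPiece (hl : 0 ≤ l) (hm : 0 ≤ m) :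
    volume (orthantPiece l m K K' I) =
      ENNReal.ofReal (l ^ #I) * volume (restrictCoords I '' K) *
        (ENNReal.ofReal (m ^ (n - #I)) * volume (restrictCoords Iᶜ '' K')) := by
  rw [orthantPiece_eq_preimage, (measurePreserving_splitCoords I).measure_preimage_equiv,
    Measure.volume_eq_prod, Measure.prod_prod, Measure.addHaar_smul, Measure.addHaar_smul]
  simp [abs_of_nonneg hl, abs_of_nonneg hm]

lemma convex_orthantPiece (hK : Convex ℝ K) (hK' : Convex ℝ K') :
    Convex ℝ (orthantPiece l m K K' I) := by
  rintro z ⟨⟨x, hx, hzx⟩, y, hy, hzy⟩ z' ⟨⟨x', hx', hzx'⟩, y', hy', hzy'⟩ a b ha hb hab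
  refine ⟨⟨a • x + b • x', hK hx hx' ha hb hab, fun i hi => ?_⟩,
    a • y + b • y', hK' hy hy' ha hb hab, fun i hi => ?_⟩
  · simp only [PiLp.add_apply, PiLp.smul_apply, smul_eq_mul, hzx i hi, hzx' i hi]; ring
  · simp only [PiLp.add_apply, PiLp.smul_apply, smul_eq_mul, hzy i hi, hzy' i hi]; ring

lemma orthantPiece_subset (hK : IsAntiBlocking K) (hK' : IsAntiBlocking K') :
    orthantPiece l m K K' I ⊆ l • K + m • -K' := by
  rintro z ⟨⟨x, hx, hzx⟩, y, hy, hzy⟩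
  refine mem_smul_add_smul_neg_iff.2
    ⟨coordProj I x, hK.coordProj_mem I hx, coordProj Iᶜ y, hK'.coordProj_mem Iᶜ hy, ?_⟩
  ext i
  by_cases hi : i ∈ I <;> simp [hi, hzx, hzy]

lemma subset_iUnion_orthantPiece (hK : IsAntiBlocking K) (hKc : Convex ℝ K)
    (hK' : IsAntiBlocking K') (hK'c : Convex ℝ K') (hl : 0 < l) (hm : 0 < m) :
    l • K + m • -K' ⊆ ⋃ I, orthantPiece l m K K' I := by
  intro z hz
  obtain ⟨x, hx, y, hy, rfl⟩ := mem_smul_add_smul_neg_iff.1 hz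
  have hx0 := hK.nonneg hx
  have hy0 := hK'.nonneg hy
  let I := univ.filter fun i => 0 ≤ l * x i - m * y i
  refine Set.mem_iUnion.2 ⟨I, ⟨coordProj I (l⁻¹ • (l • x - m • y)), ?_, fun i hi => ?_⟩,
    coordProj Iᶜ (m⁻¹ • (m • y - l • x)), ?_, fun i hi => ?_⟩
  · exact hK.coordProj_smul_sub_mem hKc hx hy0 hl hm.le fun i hi => by simpa [I] using hi
  · simp only [PiLp.sub_apply, PiLp.smul_apply, smul_eq_mul, coordProj_apply, hi, if_true]
    field_simp
  · exact hK'.coordProj_smul_sub_mem hK'c hy hx0 hm hl.le fun i hi => by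
      simpa [I] using (lt_of_not_ge (by simpa [I] using hi)).le
  · simp only [PiLp.sub_apply, PiLp.smul_apply, smul_eq_mul, coordProj_apply, mem_compl, hi,
      not_false_eq_true, if_true]
    field_simp
    ring

lemma orthantPiece_inter_subset (hK : K ⊆ nonnegOrthant n) (hK' : K' ⊆ nonnegOrthant n)
    (hl : 0 ≤ l) (hm : 0 ≤ m) {i : Fin n} (hiI : i ∈ I) (hiJ : i ∉ J) :
    orthantPiece l m K K' I ∩ orthantPiece l m K K' J ⊆ {z | z i = 0} := by
  rintro z ⟨⟨⟨x, hx, hzx⟩, -⟩, -, y, hy, hzy⟩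
  have h₁ : 0 ≤ z i := hzx i hiI ▸ mul_nonneg hl (hK hx i)
  have h₂ : z i ≤ 0 := hzy i hiJ ▸ by nlinarith [hK' hy i]
  exact le_antisymm h₂ h₁

lemma aedisjoint_orthantPiece (hK : K ⊆ nonnegOrthant n) (hK' : K' ⊆ nonnegOrthant n)
    (hl : 0 ≤ l) (hm : 0 ≤ m) (hIJ : I ≠ J) :
    AEDisjoint volume (orthantPiece l m K K' I) (orthantPiece l m K K' J) := by
  obtain ⟨i, hi⟩ := symmDiff_nonempty.2 hIJ
  refine measure_mono_null ?_ (EuclideanSpace.volume_setOf_apply_eq_zero i)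
  rcases mem_symmDiff.1 hi with ⟨hiI, hiJ⟩ | ⟨hiJ, hiI⟩
  · exact orthantPiece_inter_subset hK hK' hl hm hiI hiJ
  · exact Set.inter_comm _ _ ▸ orthantPiece_inter_subset hK hK' hl hm hiJ hiI

theorem volume_smul_add_smul_neg (hK : IsAntiBlocking K) (hKc : Convex ℝ K)
    (hK' : IsAntiBlocking K') (hK'c : Convex ℝ K') (hl : 0 < l) (hm : 0 < m) :
    volume (l • K + m • -K') =
      ∑ I, ENNReal.ofReal (l ^ #I) * volume (restrictCoords I '' K) *
        (ENNReal.ofReal (m ^ (n - #I)) * volume (restrictCoords Iᶜ '' K')) := by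
  have hcover : l • K + m • -K' = ⋃ I, orthantPiece l m K K' I :=
    (subset_iUnion_orthantPiece hK hKc hK' hK'c hl hm).antisymm
      (Set.iUnion_subset fun I => orthantPiece_subset hK hK')
  rw [hcover, measure_iUnion₀ (fun I J hIJ => aedisjoint_orthantPiece hK.1 hK'.1 hl.le hm.le hIJ)
    fun I => (convex_orthantPiece hKc hK'c).nullMeasurableSet volume, tsum_fintype]
  exact sum_congr rfl fun I _ => volume_orthantPiece hl.le hm.le

end orthantPiece

theorem toReal_volume_smul_add_smul_neg {K K' : Set (EuclideanSpace ℝ (Fin n))}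
    (hK : IsAntiBlocking K) (hKc : Convex ℝ K) (hKcomp : IsCompact K)
    (hK' : IsAntiBlocking K') (hK'c : Convex ℝ K') (hK'comp : IsCompact K') {l m : ℝ}
    (hl : 0 < l) (hm : 0 < m) :
    (volume (l • K + m • -K')).toReal =
      ∑ i ∈ range (n + 1), l ^ i * m ^ (n - i) *
        ∑ I ∈ powersetCard i univ,
          (volume (restrictCoords I '' K)).toReal * (volume (restrictCoords Iᶜ '' K')).toReal := by
  have hvol_ne_top (J : Finset (Fin n)) {S : Set (EuclideanSpace ℝ (Fin n))}
      (hS : IsCompact S) : volume (restrictCoords J '' S) ≠ ⊤ :=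
    (hS.image (by unfold restrictCoords; fun_prop)).measure_lt_top.ne
  rw [volume_smul_add_smul_neg hK hKc hK' hK'c hl hm, ENNReal.toReal_sum, ← powerset_univ,
    sum_powerset, card_univ, Fintype.card_fin]
  · refine sum_congr rfl fun i _ => ?_
    rw [mul_sum]
    refine sum_congr rfl fun I hI => ?_
    rw [(mem_powersetCard.1 hI).2]
    simp only [ENNReal.toReal_mul, ENNReal.toReal_ofReal (pow_nonneg hl.le _),
      ENNReal.toReal_ofReal (pow_nonneg hm.le _)]
    ring
  · exact fun I _ => ENNReal.mul_ne_top
      (ENNReal.mul_ne_top ENNReal.ofReal_ne_top (hvol_ne_top I hKcomp))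
      (ENNReal.mul_ne_top ENNReal.ofReal_ne_top (hvol_ne_top Iᶜ hK'comp))

theorem eq_of_forall_sum_range_mul_pow_eq {R : Type*} [CommRing R] [IsDomain R] {S : Set R}
    (hS : S.Infinite) {n : ℕ} {a b : ℕ → R}
    (h : ∀ x ∈ S, ∑ i ∈ range (n + 1), a i * x ^ i = ∑ i ∈ range (n + 1), b i * x ^ i)
    {j : ℕ} (hj : j ≤ n) : a j = b j := by
  open Polynomial in
  have key := eq_of_infinite_eval_eq (∑ i ∈ range (n + 1), C (a i) * X ^ i)
    (∑ i ∈ range (n + 1), C (b i) * X ^ i)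
    (hS.mono fun x hx => by simpa [eval_finsetSum] using h x hx)
  simpa [finsetSum_coeff, coeff_C_mul_X_pow, Nat.lt_succ_iff.2 hj] using congrArg (coeff · j) key

theorem mixed_volume_antiblocking_opposite_orthants_general
    (n : ℕ) (K K' : Set (EuclideanSpace ℝ (Fin n)))
    (hKconv : Convex ℝ K) (hKcomp : IsCompact K)
    (hKab : IsAntiBlocking K)
    (hK'conv : Convex ℝ K') (hK'comp : IsCompact K')
    (hK'ab : IsAntiBlocking K')
    (j : ℕ) (hj : j ≤ n)
    (V : ℕ → ℝ)
    (hV : ∀ l m : ℝ, 0 ≤ l → 0 ≤ m →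
      (volume (l • K + m • (-K'))).toReal =
        ∑ i ∈ Finset.range (n + 1), (n.choose i : ℝ) * l ^ i * m ^ (n - i) * V i) :
    V j = (n.choose j : ℝ)⁻¹ *
      ∑ I ∈ (Finset.univ : Finset (Fin n)).powersetCard j,
        (volume (restrictCoords I '' K)).toReal *
          (volume (restrictCoords Iᶜ '' K')).toReal := by
  have hpoly : ∀ l ∈ Set.Ioi (0 : ℝ),
      ∑ i ∈ range (n + 1), (n.choose i * V i) * l ^ i =
        ∑ i ∈ range (n + 1), (∑ I ∈ powersetCard i univ,
          (volume (restrictCoords I '' K)).toReal * (volume (restrictCoords Iᶜ '' K')).toReal) *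
            l ^ i := by
    intro l hl
    have h := toReal_volume_smul_add_smul_neg hKab hKconv hKcomp hK'ab hK'conv hK'comp hl one_pos
    rw [hV l 1 hl.le zero_le_one] at h
    simpa [mul_comm, mul_left_comm, mul_assoc] using h
  rw [← eq_of_forall_sum_range_mul_pow_eq (Set.Ioi_infinite 0) hpoly hj,
    inv_mul_cancel_left₀ (by exact_mod_cast (Nat.choose_pos hj).ne')]

/-- **Decomposition of mixed volumes of anti-blocking bodies in opposite orthants.**
For anti-blocking bodies `K, K' ⊆ ℝ₊ⁿ` and `0 ≤ j ≤ n`,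
`Vₙ(K[j], -K'[n-j]) = (n choose j)⁻¹ ∑_E Vol_j(P_E K) · Vol_{n-j}(P_{E^⊥} K')`,
the sum running over all `j`-dimensional coordinate subspaces `E`. -/
theorem mixed_volume_antiblocking_opposite_orthants
    (n : ℕ) (K K' : Set (EuclideanSpace ℝ (Fin n)))
    (hKconv : Convex ℝ K) (hKcomp : IsCompact K) (hKne : K.Nonempty)
    (hKab : IsAntiBlocking K)
    (hK'conv : Convex ℝ K') (hK'comp : IsCompact K') (hK'ne : K'.Nonempty)
    (hK'ab : IsAntiBlocking K')
    (j : ℕ) (hj : j ≤ n)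
    (V : ℕ → ℝ)
    (hV : ∀ l m : ℝ, 0 ≤ l → 0 ≤ m →
      (volume (l • K + m • (-K'))).toReal =
        ∑ i ∈ Finset.range (n + 1), (n.choose i : ℝ) * l ^ i * m ^ (n - i) * V i) :
    V j = (n.choose j : ℝ)⁻¹ *
      ∑ I ∈ (Finset.univ : Finset (Fin n)).powersetCard j,
        (volume (restrictCoords I '' K)).toReal *
          (volume (restrictCoords Iᶜ '' K')).toReal :=
  mixed_volume_antiblocking_opposite_orthants_general n K K' hKconv hKcomp hKab hK'conv hK'comp
    hK'ab j hj V hV
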